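/- A morphism f : n → m in the Temperley-Lieb diagram category D is epic if and only if f has no caps, i.e. no two elements of the bottom row [m] are paired with each other by f. -/

import Mathlib

open Sum Relation

/-- A fixed-point free involution. -/
def FPF {X : Type*} (f : X → X) : Prop :=
  Function.Involutive f ∧ ∀ x, f x ≠ x

/-- Condition (PL1) for `f` with respect to the order on `X`:
if `i < j < f i` then `i < f j < f i`. -/
def PL1 {X : Type*} [Preorder X] (f : X → X) : Prop :=
  ∀ i j, i < j → j < f i → i < f j ∧ f j < f i

/-- Incomparability `x # y`. -/
def Incomp {X : Type*} [Preorder X] (x y : X) : Prop :=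
  ¬ (x ≤ y) ∧ ¬ (y ≤ x)

/-- Condition (PL2): if `f i # i`, `i < j` and `j # f j` then `f i < f j`. -/
def PL2 {X : Type*} [Preorder X] (f : X → X) : Prop :=
  ∀ i j, Incomp (f i) i → i < j → Incomp j (f j) → f i < f j

/-- A planar involution on `[n] ⊕ [m]` (with the disjoint-sum partial order):
a fixed-point free involution satisfying (PL1) and (PL2).  These are the
elements of `P(n, m)`. -/
def Planar {n m : ℕ} (f : Fin n ⊕ Fin m → Fin n ⊕ Fin m) : Prop :=
  FPF f ∧ PL1 f ∧ PL2 f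

/-- The graph relation of a function. -/
def graphRel {X : Type*} (f : X → X) : X → X → Prop := fun x y => f x = y

/-- The execution formula: the Geometry-of-Interaction composite of a relation
`R` on `A ⊕ B` and a relation `S` on `B ⊕ C`, defined componentwise by
`θ_{A,A} = R_{A,A} ∪ R_{A,B};S_{B,B};(R_{B,B};S_{B,B})*;R_{B,A}`,
`θ_{A,C} = R_{A,B};(S_{B,B};R_{B,B})*;S_{B,C}`,
`θ_{C,A} = S_{C,B};(R_{B,B};S_{B,B})*;R_{B,A}`,
`θ_{C,C} = S_{C,C} ∪ S_{C,B};R_{B,B};(S_{B,B};R_{B,B})*;S_{B,C}`. -/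
def ExecR {A B C : Type*} (R : A ⊕ B → A ⊕ B → Prop) (S : B ⊕ C → B ⊕ C → Prop) :
    A ⊕ C → A ⊕ C → Prop :=
  let Raa : A → A → Prop := fun i j => R (Sum.inl i) (Sum.inl j)
  let Rab : A → B → Prop := fun i j => R (Sum.inl i) (Sum.inr j)
  let Rba : B → A → Prop := fun i j => R (Sum.inr i) (Sum.inl j)
  let Rbb : B → B → Prop := fun i j => R (Sum.inr i) (Sum.inr j)
  let Sbb : B → B → Prop := fun i j => S (Sum.inl i) (Sum.inl j)
  let Sbc : B → C → Prop := fun i j => S (Sum.inl i) (Sum.inr j)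
  let Scb : C → B → Prop := fun i j => S (Sum.inr i) (Sum.inl j)
  let Scc : C → C → Prop := fun i j => S (Sum.inr i) (Sum.inr j)
  fun x y =>
    match x, y with
    | Sum.inl i, Sum.inl j =>
        Raa i j ∨
          Relation.Comp Rab
            (Relation.Comp Sbb
              (Relation.Comp (Relation.ReflTransGen (Relation.Comp Rbb Sbb)) Rba)) i j
    | Sum.inl i, Sum.inr j =>
        Relation.Comp Rab
          (Relation.Comp (Relation.ReflTransGen (Relation.Comp Sbb Rbb)) Sbc) i j
    | Sum.inr i, Sum.inl j =>
        Relation.Comp Scb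
          (Relation.Comp (Relation.ReflTransGen (Relation.Comp Rbb Sbb)) Rba) i j
    | Sum.inr i, Sum.inr j =>
        Scc i j ∨
          Relation.Comp Scb
            (Relation.Comp Rbb
              (Relation.Comp (Relation.ReflTransGen (Relation.Comp Sbb Rbb)) Sbc)) i j

/-- The execution-formula composite of two involutions, as a function: for
planar involutions the execution relation is the graph of a function, and
`execFun f g` is that function. -/
noncomputable def execFun {n m p : ℕ} (f : Fin n ⊕ Fin m → Fin n ⊕ Fin m)
    (g : Fin m ⊕ Fin p → Fin m ⊕ Fin p) : Fin n ⊕ Fin p → Fin n ⊕ Fin p :=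
  fun x =>
    @dite _ (∃ y, ExecR (graphRel f) (graphRel g) x y) (Classical.propDecidable _)
      (fun h => h.choose) (fun _ => x)

/-- The partial bijection `Cyc(f,g) = f_{m,m} ; g_{m,m}` on `[m]`:
relational composition of the caps of `f` with the cups of `g`. -/
def Cyc {n m p : ℕ} (f : Fin n ⊕ Fin m → Fin n ⊕ Fin m)
    (g : Fin m ⊕ Fin p → Fin m ⊕ Fin p) : Fin m → Fin m → Prop :=
  Relation.Comp (fun i j => f (Sum.inr i) = Sum.inr j)
    (fun i j => g (Sum.inl i) = Sum.inl j)

/-- Iterated relational composition `r^k` (with `r^0` the identity). -/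
def relPow {α : Type*} (r : α → α → Prop) : ℕ → α → α → Prop
  | 0 => Eq
  | k + 1 => Relation.Comp r (relPow r k)

/-- `i` is a cyclic element of `r`: `r^k i i` for some `k > 0`. -/
def Cyclic {α : Type*} (r : α → α → Prop) (i : α) : Prop :=
  ∃ k, 0 < k ∧ relPow r k i i

/-- The cycle (orbit) of `i` under `r`. -/
def cycleOf {α : Type*} (r : α → α → Prop) (i : α) : Set α :=
  {j | ∃ k, relPow r k i j}

/-- `Z(f,g)`: the number of distinct cycles of `Cyc(f,g)`. -/
noncomputable def Z {n m p : ℕ} (f : Fin n ⊕ Fin m → Fin n ⊕ Fin m)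
    (g : Fin m ⊕ Fin p → Fin m ⊕ Fin p) : ℕ :=
  {S : Set (Fin m) | ∃ i, Cyclic (Cyc f g) i ∧ S = cycleOf (Cyc f g) i}.ncard

/-- A morphism `n → m` of the Temperley-Lieb category: a loop count together
with a function on `[n] ⊕ [m]` (required to be a planar involution for
genuine morphisms). -/
def TLHom (n m : ℕ) : Type :=
  ℕ × (Fin n ⊕ Fin m → Fin n ⊕ Fin m)

/-- Composition in the Temperley-Lieb category:
`(t, g) ∘ (s, f) = (s + t + Z(f,g), f;g)`. -/
noncomputable def TLcomp {n m p : ℕ} (F : TLHom n m) (G : TLHom m p) : TLHom n p :=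
  (F.1 + G.1 + Z F.2 G.2, execFun F.2 G.2)

/-- The identity morphism: zero loops and the twist involution `i ↔ i'`. -/
def tlid (n : ℕ) : TLHom n n :=
  (0, Sum.swap)

/-- `f` has a cup: two top-row elements are paired with each other. -/
def HasCup {n m : ℕ} (f : Fin n ⊕ Fin m → Fin n ⊕ Fin m) : Prop :=
  ∃ i j : Fin n, f (Sum.inl i) = Sum.inl j

/-- `f` has a cap: two bottom-row elements are paired with each other. -/
def HasCap {n m : ℕ} (f : Fin n ⊕ Fin m → Fin n ⊕ Fin m) : Prop :=
  ∃ i j : Fin m, f (Sum.inr i) = Sum.inr j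

/-- `F : n → m` is monic in the diagram category `D`: left-cancellable with
respect to all morphisms of `D` (pairs of a loop count and a planar
involution). -/
def Monic {n m : ℕ} (F : TLHom n m) : Prop :=
  ∀ (p : ℕ) (G H : TLHom p n), Planar G.2 → Planar H.2 →
    TLcomp G F = TLcomp H F → G = H

/-- `F : n → m` is epic in the diagram category `D`: right-cancellable with
respect to all morphisms of `D`. -/
def Epic {n m : ℕ} (F : TLHom n m) : Prop :=
  ∀ (p : ℕ) (G H : TLHom m p), Planar G.2 → Planar H.2 →
    TLcomp F G = TLcomp F H → G = H

/-!
If `f` has no caps, every bottom point of `f` is joined to a top point, so composing with `g`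
creates no loops and every path through the middle row bounces at most once: `f ; g` is `g` with
its top points relabelled by an injection `[m] → [n]`, so `g` can be read off from `f ; g`.

If `f` has a cap, planarity provides one joining neighbouring points `i, i + 1`. Composing `f`
with the diagram `e` that has a cup and a cap at `i, i + 1` gives back `f` with two loops: the
cap of `f` and the cup of `e` close up (counted by `Z` once at each of their two points), and the
cap of `e` takes the place of the cap of `f`. The identity with two loops has the same composite
with `f`.
-/
section Relations

variable {α : Type*} {r : α → α → Prop}

theorem reflTransGen_eq_of_forall_eq (h : ∀ a b, r a b → a = b) : ReflTransGen r = Eq := by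
  funext a b
  refine propext ⟨fun hab => ?_, fun hab => hab ▸ .refl⟩
  induction hab with
  | refl => rfl
  | tail _ hbc ih => exact ih.trans (h _ _ hbc)

variable {s : Set α}

theorem relPow_iff_of_iff (hr : ∀ a b, r a b ↔ a = b ∧ a ∈ s) :
    ∀ k a b, relPow r k a b ↔ a = b ∧ (k = 0 ∨ a ∈ s)
  | 0, a, b => by simp [relPow]
  | k + 1, a, b => by
    simp only [relPow, Relation.Comp, hr, relPow_iff_of_iff hr k]
    grind

theorem ncard_cycles_of_iff (hr : ∀ a b, r a b ↔ a = b ∧ a ∈ s) :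
    {S : Set α | ∃ i, Cyclic r i ∧ S = cycleOf r i}.ncard = s.ncard := by
  have hcyclic : ∀ i, Cyclic r i ↔ i ∈ s := fun i => by
    simp only [Cyclic, relPow_iff_of_iff hr]
    exact ⟨fun ⟨k, hk, _, h⟩ => h.resolve_left hk.ne',
      fun h => ⟨1, one_pos, trivial, .inr h⟩⟩
  have hcycle : ∀ i, cycleOf r i = {i} := fun i => by
    ext j
    simp only [cycleOf, relPow_iff_of_iff hr, Set.mem_ofPred_eq, Set.mem_singleton_iff]
    exact ⟨fun ⟨_, h, _⟩ => h.symm, fun h => ⟨0, h.symm, .inl rfl⟩⟩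
  have : {S : Set α | ∃ i, Cyclic r i ∧ S = cycleOf r i} = (fun i => {i}) '' s := by
    ext S
    simp only [hcyclic, hcycle, Set.mem_ofPred_eq, Set.mem_image, eq_comm]
  rw [this, Set.ncard_image_of_injective _ Set.singleton_injective]

end Relations

section Execution

variable {n m p : ℕ} {f : Fin n ⊕ Fin m → Fin n ⊕ Fin m}
  {g : Fin m ⊕ Fin p → Fin m ⊕ Fin p}

theorem execFun_apply_eq {x y : Fin n ⊕ Fin p}
    (h : ∀ z, ExecR (graphRel f) (graphRel g) x z ↔ y = z) : execFun f g x = y := by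
  have hex : ∃ z, ExecR (graphRel f) (graphRel g) x z := ⟨y, (h y).2 rfl⟩
  rw [execFun, dif_pos hex]
  exact ((h _).1 hex.choose_spec).symm

/- When a cap of `f` followed by a cup of `g`, and a cup of `g` followed by a cap of `f`, always
close up, no path through the middle row bounces twice, so the Kleene stars in `ExecR` are the
identity. -/
theorem execR_inl_inl_iff (hcapcup : ∀ a b, Cyc f g a b → a = b) {a b : Fin n} :
    ExecR (graphRel f) (graphRel g) (inl a) (inl b) ↔ f (inl a) = inl b ∨
      ∃ k k', f (inl a) = inr k ∧ g (inl k) = inl k' ∧ f (inr k') = inl b := by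
  have : ReflTransGen (Comp (fun i j => f (inr i) = inr j) (fun i j => g (inl i) = inl j)) = Eq :=
    reflTransGen_eq_of_forall_eq hcapcup
  simp [ExecR, graphRel, Comp, this]

theorem execR_inl_inr_iff (hcupcap : ∀ a b c, g (inl a) = inl b → f (inr b) = inr c → a = c)
    {a : Fin n} {c : Fin p} :
    ExecR (graphRel f) (graphRel g) (inl a) (inr c) ↔
      ∃ k, f (inl a) = inr k ∧ g (inl k) = inr c := by
  have : ReflTransGen (Comp (fun i j => g (inl i) = inl j) (fun i j => f (inr i) = inr j)) = Eq :=
    reflTransGen_eq_of_forall_eq fun a c ⟨b, hab, hbc⟩ => hcupcap a b c hab hbc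
  simp [ExecR, graphRel, Comp, this]

theorem execR_inr_inl_iff (hcapcup : ∀ a b, Cyc f g a b → a = b) {c : Fin p} {b : Fin n} :
    ExecR (graphRel f) (graphRel g) (inr c) (inl b) ↔
      ∃ k, g (inr c) = inl k ∧ f (inr k) = inl b := by
  have : ReflTransGen (Comp (fun i j => f (inr i) = inr j) (fun i j => g (inl i) = inl j)) = Eq :=
    reflTransGen_eq_of_forall_eq hcapcup
  simp [ExecR, graphRel, Comp, this]

theorem execR_inr_inr_iff (hcupcap : ∀ a b c, g (inl a) = inl b → f (inr b) = inr c → a = c)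
    {c c' : Fin p} :
    ExecR (graphRel f) (graphRel g) (inr c) (inr c') ↔ g (inr c) = inr c' ∨
      ∃ k k', g (inr c) = inl k ∧ f (inr k) = inr k' ∧ g (inl k') = inr c' := by
  have : ReflTransGen (Comp (fun i j => g (inl i) = inl j) (fun i j => f (inr i) = inr j)) = Eq :=
    reflTransGen_eq_of_forall_eq fun a c ⟨b, hab, hbc⟩ => hcupcap a b c hab hbc
  simp [ExecR, graphRel, Comp, this]

end Execution

section Identity

variable {n m : ℕ}

theorem planar_swap : Planar (Sum.swap : Fin m ⊕ Fin m → Fin m ⊕ Fin m) := by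
  refine ⟨⟨Sum.swap_swap, fun x => ?_⟩, fun x y hxy hyx => ?_, fun x y _ hxy _ => ?_⟩
  · cases x <;> simp
  · cases x <;> cases y <;> simp_all
  · exact Sum.swap_lt_swap_iff.2 hxy

variable {f : Fin n ⊕ Fin m → Fin n ⊕ Fin m}

theorem execFun_swap : execFun f Sum.swap = f := by
  have hcapcup : ∀ a b, Cyc f Sum.swap a b → a = b := by simp [Cyc, Comp]
  have hcupcap : ∀ a b c, (Sum.swap (inl a) : Fin m ⊕ Fin m) = inl b →
      f (inr b) = inr c → a = c := by
    simp
  funext x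
  refine execFun_apply_eq fun z => ?_
  rcases x with a | c <;> rcases z with b | c'
  · simp [execR_inl_inl_iff hcapcup]
  · simp [execR_inl_inr_iff hcupcap]
  · simp [execR_inr_inl_iff hcapcup]
  · simp [execR_inr_inr_iff hcupcap]

theorem Z_swap : Z f Sum.swap = 0 := by
  rw [Z, ncard_cycles_of_iff (s := ∅) (by simp [Cyc, Comp]), Set.ncard_empty]

end Identity

section CupCap

variable {n m : ℕ} {i j : Fin m}

def capcup (i j : Fin m) : Fin m ⊕ Fin m → Fin m ⊕ Fin m
  | inl k => if k = i then inl j else if k = j then inl i else inr k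
  | inr k => if k = i then inr j else if k = j then inr i else inl k

theorem capcup_inl_eq_inl {k b : Fin m} :
    capcup i j (inl k) = inl b ↔ (k = i ∧ b = j) ∨ (k = j ∧ b = i) := by
  simp only [capcup]
  split_ifs <;> simp_all [eq_comm]

theorem capcup_inl_eq_inr {k c : Fin m} :
    capcup i j (inl k) = inr c ↔ k ≠ i ∧ k ≠ j ∧ c = k := by
  simp only [capcup]
  split_ifs <;> simp_all [eq_comm]

theorem capcup_inr_eq_inr {k b : Fin m} :
    capcup i j (inr k) = inr b ↔ (k = i ∧ b = j) ∨ (k = j ∧ b = i) := by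
  simp only [capcup]
  split_ifs <;> simp_all [eq_comm]

theorem capcup_inr_eq_inl {k c : Fin m} :
    capcup i j (inr k) = inl c ↔ k ≠ i ∧ k ≠ j ∧ c = k := by
  simp only [capcup]
  split_ifs <;> simp_all [eq_comm]

theorem capcup_involutive : Function.Involutive (capcup i j) := by
  rintro (k | k) <;> by_cases hi : k = i <;> by_cases hj : k = j <;> simp_all [capcup]

theorem capcup_eq_swap_of_incomp {x : Fin m ⊕ Fin m} (hx : Incomp (capcup i j x) x) :
    capcup i j x = x.swap := by
  rcases x with k | k <;> rcases hc : capcup i j _ with d | d <;> rw [hc] at hx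
  all_goals first
    | exact absurd (le_total d k) (by simpa [Incomp, not_or] using hx)
    | simp_all [capcup_inl_eq_inr, capcup_inr_eq_inl]

theorem planar_capcup (hij : (j : ℕ) = i + 1) : Planar (capcup i j) := by
  refine ⟨⟨capcup_involutive, fun x hx => ?_⟩, fun x y hxy hyx => ?_,
    fun x y hx hxy hy => ?_⟩
  · rcases x with k | k
    · rcases capcup_inl_eq_inl.1 hx with ⟨rfl, rfl⟩ | ⟨rfl, rfl⟩ <;> omega
    · rcases capcup_inr_eq_inr.1 hx with ⟨rfl, rfl⟩ | ⟨rfl, rfl⟩ <;> omega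
  · exfalso
    rcases x with a | a <;> rcases hc : capcup i j _ with d | d <;> rw [hc] at hyx <;>
      rcases y with b | b <;> simp only [inl_lt_inl_iff, inr_lt_inr_iff, not_inl_lt_inr,
        not_inr_lt_inl, Fin.lt_def] at hxy hyx
    · rcases capcup_inl_eq_inl.1 hc with ⟨rfl, rfl⟩ | ⟨rfl, rfl⟩ <;> omega
    · rcases capcup_inr_eq_inr.1 hc with ⟨rfl, rfl⟩ | ⟨rfl, rfl⟩ <;> omega
  · rw [capcup_eq_swap_of_incomp hx, capcup_eq_swap_of_incomp ⟨hy.2, hy.1⟩]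
    exact Sum.swap_lt_swap_iff.2 hxy

variable {f : Fin n ⊕ Fin m → Fin n ⊕ Fin m}

theorem execFun_capcup (hf : Function.Involutive f) (hcap : f (inr i) = inr j) :
    execFun f (capcup i j) = f := by
  have hcap' : f (inr j) = inr i := by rw [← hcap, hf]
  have hfi : ∀ x, f x = inr i ↔ x = inr j := fun x => by rw [hf.eq_iff, hcap]
  have hfj : ∀ x, f x = inr j ↔ x = inr i := fun x => by rw [hf.eq_iff, hcap']
  have hcapcup : ∀ a b, Cyc f (capcup i j) a b → a = b := by
    rintro a b ⟨c, hac, hcb⟩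
    rcases capcup_inl_eq_inl.1 hcb with ⟨rfl, rfl⟩ | ⟨rfl, rfl⟩
    · exact inr_injective ((hfi _).1 hac)
    · exact inr_injective ((hfj _).1 hac)
  have hcupcap : ∀ a b c, capcup i j (inl a) = inl b → f (inr b) = inr c → a = c := by
    intro a b c hab hbc
    rcases capcup_inl_eq_inl.1 hab with ⟨rfl, rfl⟩ | ⟨rfl, rfl⟩
    · exact inr_injective (hcap'.symm.trans hbc)
    · exact inr_injective (hcap.symm.trans hbc)
  funext x
  refine execFun_apply_eq fun z => ?_
  rcases x with a | c <;> rcases z with b | c'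
  · refine (execR_inl_inl_iff hcapcup).trans (or_iff_left ?_)
    rintro ⟨k, k', hk, hkk', -⟩
    rcases capcup_inl_eq_inl.1 hkk' with ⟨rfl, -⟩ | ⟨rfl, -⟩ <;> simp [hfi, hfj] at hk
  · rw [execR_inl_inr_iff hcupcap]
    refine ⟨fun ⟨k, hk, hkc'⟩ => ?_,
      fun h => ⟨c', h, capcup_inl_eq_inr.2 ⟨?_, ?_, rfl⟩⟩⟩
    · obtain ⟨-, -, rfl⟩ := capcup_inl_eq_inr.1 hkc'
      exact hk
    all_goals rintro rfl; simp [hfi, hfj] at h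
  · rw [execR_inr_inl_iff hcapcup]
    refine ⟨fun ⟨k, hck, hk⟩ => ?_,
      fun h => ⟨c, capcup_inr_eq_inl.2 ⟨?_, ?_, rfl⟩, h⟩⟩
    · obtain ⟨-, -, rfl⟩ := capcup_inr_eq_inl.1 hck
      exact hk
    all_goals rintro rfl; simp [hcap, hcap'] at h
  · rw [execR_inr_inr_iff hcupcap]
    constructor
    · rintro (h | ⟨k, k', hck, hkk', hk'c'⟩)
      · rcases capcup_inr_eq_inr.1 h with ⟨rfl, rfl⟩ | ⟨rfl, rfl⟩
        exacts [hcap, hcap']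
      · obtain ⟨-, -, rfl⟩ := capcup_inr_eq_inl.1 hck
        obtain ⟨-, -, rfl⟩ := capcup_inl_eq_inr.1 hk'c'
        exact hkk'
    · intro h
      by_cases hci : c = i
      · subst hci
        exact .inl (capcup_inr_eq_inr.2 (.inl ⟨rfl, inr_injective (h.symm.trans hcap)⟩))
      by_cases hcj : c = j
      · subst hcj
        exact .inl (capcup_inr_eq_inr.2 (.inr ⟨rfl, inr_injective (h.symm.trans hcap')⟩))
      refine .inr ⟨c, c', capcup_inr_eq_inl.2 ⟨hci, hcj, rfl⟩, h,
        capcup_inl_eq_inr.2 ⟨?_, ?_, rfl⟩⟩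
      · rintro rfl
        exact hcj (inr_injective ((hfi _).1 h))
      · rintro rfl
        exact hci (inr_injective ((hfj _).1 h))

theorem Z_capcup (hf : Function.Involutive f) (hcap : f (inr i) = inr j) (hij : i ≠ j) :
    Z f (capcup i j) = 2 := by
  have hcap' : f (inr j) = inr i := by rw [← hcap, hf]
  have hcyc : ∀ a b, Cyc f (capcup i j) a b ↔ a = b ∧ a ∈ ({i, j} : Set (Fin m)) := by
    intro a b
    simp only [Cyc, Comp, capcup_inl_eq_inl, hf.eq_iff]
    aesop
  rw [Z, ncard_cycles_of_iff hcyc, Set.ncard_pair hij]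

end CupCap

section Caps

variable {n m p : ℕ} {f : Fin n ⊕ Fin m → Fin n ⊕ Fin m}

theorem exists_cap_succ (hf : FPF f) (hpl : PL1 f) (hcap : HasCap f) :
    ∃ i j : Fin m, f (inr i) = inr j ∧ (j : ℕ) = i + 1 := by
  suffices h : ∀ d (a b : Fin m), (b : ℕ) - a = d → a < b → f (inr a) = inr b →
      ∃ i j : Fin m, f (inr i) = inr j ∧ (j : ℕ) = i + 1 by
    obtain ⟨a, b, hab⟩ := hcap
    rcases lt_trichotomy a b with hlt | rfl | hgt
    · exact h _ a b rfl hlt hab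
    · exact absurd hab (hf.2 _)
    · exact h _ b a rfl hgt (by rw [← hab, hf.1])
  intro d
  induction d using Nat.strong_induction_on with
  | _ d ih =>
    intro a b hd hab hfab
    by_cases hsucc : (b : ℕ) = a + 1
    · exact ⟨a, b, hfab, hsucc⟩
    obtain ⟨k, hkv⟩ : ∃ k : Fin m, (k : ℕ) = a + 1 := ⟨⟨a + 1, by omega⟩, rfl⟩
    have hak : (inr a : Fin n ⊕ Fin m) < inr k := by
      rw [inr_lt_inr_iff, Fin.lt_def]
      omega
    have hkb : inr k < f (inr a) := by
      rw [hfab, inr_lt_inr_iff, Fin.lt_def]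
      omega
    -- PL1 puts the partner of `a + 1` strictly inside the cap `(a, b)`: a narrower cap.
    obtain ⟨hak', hk'b⟩ := hpl _ _ hak hkb
    rcases hk : f (inr k) with z | k'
    · simp [hk] at hak'
    rw [hk, inr_lt_inr_iff, Fin.lt_def] at hak'
    rw [hk, hfab, inr_lt_inr_iff, Fin.lt_def] at hk'b
    have hkk' : (k : ℕ) ≠ k' := fun h => hf.2 (inr k) (by rw [hk, Fin.ext h])
    exact ih _ (by omega) k k' rfl (Fin.lt_def.2 (by omega)) hk

theorem execFun_map_of_forall_eq_inl (hf : Function.Involutive f) {φ : Fin m → Fin n}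
    (hφ : ∀ k, f (inr k) = inl (φ k)) (g : Fin m ⊕ Fin p → Fin m ⊕ Fin p)
    (y : Fin m ⊕ Fin p) :
    execFun f g (Sum.map φ id y) = Sum.map φ id (g y) := by
  have hφ' : ∀ k, f (inl (φ k)) = inr k := fun k => by rw [← hφ, hf]
  have hcapcup : ∀ a b, Cyc f g a b → a = b := by rintro a b ⟨c, hac, -⟩; simp [hφ] at hac
  have hcupcap : ∀ a b c, g (inl a) = inl b → f (inr b) = inr c → a = c := by simp [hφ]
  refine execFun_apply_eq fun z => ?_
  rcases y with k | c <;> rcases z with b | c' <;> rcases hg : g _ with k' | c'' <;>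
    simp [execR_inl_inl_iff hcapcup, execR_inl_inr_iff hcupcap, execR_inr_inl_iff hcapcup,
      execR_inr_inr_iff hcupcap, hφ, hφ', hg]

theorem Z_eq_zero_of_not_hasCap (hcap : ¬ HasCap f) (g : Fin m ⊕ Fin p → Fin m ⊕ Fin p) :
    Z f g = 0 := by
  rw [Z, ncard_cycles_of_iff (s := ∅) fun a b => ?_, Set.ncard_empty]
  simp only [Set.mem_empty_iff_false, and_false, iff_false]
  exact fun ⟨c, hac, _⟩ => hcap ⟨a, c, hac⟩

end Caps

section Epic

variable {n m : ℕ} {F : TLHom n m}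

theorem Epic.not_hasCap (hF : Planar F.2) (hE : Epic F) : ¬ HasCap F.2 := by
  intro hcap
  obtain ⟨i, j, hij, hsucc⟩ := exists_cap_succ hF.1 hF.2.1 hcap
  have hne : i ≠ j := fun h => by rw [h] at hsucc; omega
  have hcomp : TLcomp F (2, Sum.swap) = TLcomp F (0, capcup i j) := by
    simp only [TLcomp, execFun_swap, Z_swap, execFun_capcup hF.1.1 hij, Z_capcup hF.1.1 hij hne,
      add_zero]
    rfl
  exact two_ne_zero (congrArg Prod.fst (hE m _ _ planar_swap (planar_capcup hsucc) hcomp))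

theorem epic_of_not_hasCap (hf : Function.Involutive F.2) (hcap : ¬ HasCap F.2) : Epic F := by
  intro p G H _ _ hGH
  have hbottom : ∀ k, ∃ b, F.2 (inr k) = inl b := fun k => by
    rcases h : F.2 (inr k) with b | c
    exacts [⟨b, rfl⟩, absurd ⟨k, c, h⟩ hcap]
  choose φ hφ using hbottom
  have hφinj : φ.Injective := fun k k' h =>
    inr_injective (hf.injective ((hφ k).trans (h ▸ (hφ k').symm)))
  have hloops : G.1 = H.1 := by
    have := congrArg Prod.fst hGH
    simp only [TLcomp, Z_eq_zero_of_not_hasCap hcap] at this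
    omega
  have hdiagram : G.2 = H.2 := by
    funext y
    apply Sum.map_injective.2 ⟨hφinj, Function.injective_id⟩
    rw [← execFun_map_of_forall_eq_inl hf hφ, ← execFun_map_of_forall_eq_inl hf hφ]
    exact congrFun (congrArg Prod.snd hGH) _
  exact Prod.ext hloops hdiagram

end Epic

/-- A morphism `f : n → m` of the Temperley-Lieb diagram category `D` is epic
iff it has no caps. -/
theorem stmt_14 (n m : ℕ) (F : TLHom n m) (hF : Planar F.2) :
    Epic F ↔ ¬ HasCap F.2 :=
  ⟨Epic.not_hasCap hF, epic_of_not_hasCap hF.1.1⟩
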